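/- arXiv:2603.05055 — 2 statements merged into one kernel-verified Lean document; each statement's English description precedes it below -/
import Mathlib

section
/- Let δ_n denote the modal formula ◇^n⊤ ∧ ¬◇^{n+1}⊤, and for S ⊆ ℕ let Φ_S = {δ_{2n} | n ∈ S} ∪ {δ_{2n+1} | n ∉ S}. Then for all S, S' ⊆ ℕ with S ≠ S', the fragment ML_{Φ_S} is not expressively contained in ML_{Φ_{S'}} with respect to the minimal normal modal logic K. In particular, there are continuum many pairwise expressively incomparable modal fragments with respect to K, and hence continuum many pairwise-incomparable modal clones with respect to K. -/
set_option maxHeartbeats 1000000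

/-! ### Modal formulas -/

inductive MF : Type
  | var : ℕ → MF
  | neg : MF → MF
  | and : MF → MF → MF
  | or : MF → MF → MF
  | dia : MF → MF
  | box : MF → MF

namespace MF

/-- Implication `φ → ψ`, as the abbreviation `¬φ ∨ ψ`. -/
def imp (φ ψ : MF) : MF := .or (.neg φ) ψ

/-- Bi-implication `φ ↔ ψ`. -/
def iff (φ ψ : MF) : MF := .and (φ.imp ψ) (ψ.imp φ)

/-- `⊥` abbreviates `p ∧ ¬p`. -/
def bot : MF := .and (.var 0) (.neg (.var 0))

/-- `⊤` abbreviates `p ∨ ¬p`. -/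
def top : MF := .or (.var 0) (.neg (.var 0))

/-- A formula is purely propositional if it contains no modal operators. -/
def isProp : MF → Prop
  | .var _ => True
  | .neg φ => φ.isProp
  | .and φ ψ => φ.isProp ∧ ψ.isProp
  | .or φ ψ => φ.isProp ∧ ψ.isProp
  | .dia _ => False
  | .box _ => False

/-- Boolean evaluation (meaningful for purely propositional formulas). -/
def propEval (v : ℕ → Bool) : MF → Bool
  | .var n => v n
  | .neg φ => !(propEval v φ)
  | .and φ ψ => propEval v φ && propEval v ψ
  | .or φ ψ => propEval v φ || propEval v ψ
  | .dia φ => propEval v φ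
  | .box φ => propEval v φ

/-- Propositional tautologies. -/
def isTautology (φ : MF) : Prop := φ.isProp ∧ ∀ v, φ.propEval v = true

/-- Uniform substitution. -/
def subst (σ : ℕ → MF) : MF → MF
  | .var n => σ n
  | .neg φ => .neg (φ.subst σ)
  | .and φ ψ => .and (φ.subst σ) (ψ.subst σ)
  | .or φ ψ => .or (φ.subst σ) (ψ.subst σ)
  | .dia φ => .dia (φ.subst σ)
  | .box φ => .box (φ.subst σ)

/-- The set of propositional variables occurring in a formula. -/
def vars : MF → Set ℕ
  | .var n => {n}
  | .neg φ => φ.vars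
  | .and φ ψ => φ.vars ∪ ψ.vars
  | .or φ ψ => φ.vars ∪ ψ.vars
  | .dia φ => φ.vars
  | .box φ => φ.vars

/-- Kripke satisfaction. -/
def sat {W : Type} (R : W → W → Prop) (V : ℕ → W → Prop) : MF → W → Prop
  | .var n, w => V n w
  | .neg φ, w => ¬ sat R V φ w
  | .and φ ψ, w => sat R V φ w ∧ sat R V ψ w
  | .or φ ψ, w => sat R V φ w ∨ sat R V ψ w
  | .dia φ, w => ∃ u, R w u ∧ sat R V φ u
  | .box φ, w => ∀ u, R w u → sat R V φ u

/-- `◇^n φ`. -/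
def diaIter : ℕ → MF → MF
  | 0, φ => φ
  | n + 1, φ => .dia (diaIter n φ)

/-- `□^n φ`. -/
def boxIter : ℕ → MF → MF
  | 0, φ => φ
  | n + 1, φ => .box (boxIter n φ)

/-- `◇^{≤n} φ`, the disjunction of `◇^k φ` for `0 ≤ k ≤ n`. -/
def diaLe : ℕ → MF → MF
  | 0, φ => φ
  | n + 1, φ => .or (diaLe n φ) (diaIter (n + 1) φ)

/-- An injective numeric encoding of modal formulas. -/
def encodeMF : MF → ℕ
  | .var n => Nat.pair 0 n
  | .neg φ => Nat.pair 1 φ.encodeMF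
  | .and φ ψ => Nat.pair 2 (Nat.pair φ.encodeMF ψ.encodeMF)
  | .or φ ψ => Nat.pair 3 (Nat.pair φ.encodeMF ψ.encodeMF)
  | .dia φ => Nat.pair 4 φ.encodeMF
  | .box φ => Nat.pair 5 φ.encodeMF

end MF

/-- A normal modal logic. -/
structure NormalLogic (Λ : Set MF) : Prop where
  taut : ∀ φ, φ.isTautology → φ ∈ Λ
  axK : ∀ φ ψ, ((MF.box (φ.imp ψ)).imp ((MF.box φ).imp (MF.box ψ))) ∈ Λ
  dual : ∀ φ, ((MF.dia φ).iff (MF.neg (MF.box (MF.neg φ)))) ∈ Λ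
  mp : ∀ φ ψ, φ.imp ψ ∈ Λ → φ ∈ Λ → ψ ∈ Λ
  usubst : ∀ φ (σ : ℕ → MF), φ ∈ Λ → φ.subst σ ∈ Λ
  nec : ∀ φ, φ ∈ Λ → MF.box φ ∈ Λ

/-- Validity on the frame `F_⊙` consisting of a single reflexive world. -/
def validOnReflPoint (φ : MF) : Prop :=
  ∀ V : ℕ → Prop, MF.sat (W := Unit) (fun _ _ => True) (fun n _ => V n) φ ()

/-- Validity on the frame `F_•` consisting of a single irreflexive world. -/
def validOnIrreflPoint (φ : MF) : Prop :=
  ∀ V : ℕ → Prop, MF.sat (W := Unit) (fun _ _ => False) (fun n _ => V n) φ ()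

/-- Type A: `F_⊙ ⊨ Λ`. -/
def TypeA (Λ : Set MF) : Prop := ∀ φ ∈ Λ, validOnReflPoint φ

/-- Type B: `F_• ⊨ Λ` and `Λ ⊢ □^n ⊥` for some `n ≥ 1`. -/
def TypeB (Λ : Set MF) : Prop :=
  (∀ φ ∈ Λ, validOnIrreflPoint φ) ∧ ∃ n ≥ 1, MF.boxIter n MF.bot ∈ Λ

/-- Type C: `F_• ⊨ Λ`, `Λ ⊬ □^n ⊥` for all `n ≥ 1`, `Λ ⊢ ◇^{≤n} □⊥` for some `n ≥ 1`. -/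
def TypeC (Λ : Set MF) : Prop :=
  (∀ φ ∈ Λ, validOnIrreflPoint φ) ∧ (∀ n ≥ 1, MF.boxIter n MF.bot ∉ Λ) ∧
    ∃ n ≥ 1, MF.diaLe n (MF.box MF.bot) ∈ Λ

/-- The (expansions of the) fragment `ML_Φ`: the smallest set of modal formulas containing
all propositional variables and closed under applying the connectives given by the formulas in
`Φ` (i.e., substituting fragment formulas into a member of `Φ`). -/
inductive MLFrag (Φ : Set MF) : MF → Prop
  | var (n : ℕ) : MLFrag Φ (MF.var n)
  | app (φ : MF) (hφ : φ ∈ Φ) (σ : ℕ → MF) (hσ : ∀ n, MLFrag Φ (σ n)) :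
      MLFrag Φ (φ.subst σ)

/-- Expressive containment `ML_Φ ≼^Λ ML_Ψ`. -/
def exprLe (Λ : Set MF) (Φ Ψ : Set MF) : Prop :=
  ∀ φ, MLFrag Φ φ → ∃ ψ, MLFrag Ψ ψ ∧ (φ.iff ψ) ∈ Λ

/-- Expressive equivalence with respect to `Λ`. -/
def exprEq (Λ : Set MF) (Φ Ψ : Set MF) : Prop := exprLe Λ Φ Ψ ∧ exprLe Λ Ψ Φ

/-- The minimal normal modal logic `K`: (semantically) the set of formulas valid in all
Kripke models. -/
def KLogic : Set MF :=
  {φ | ∀ (W : Type) (R : W → W → Prop) (V : ℕ → W → Prop) (w : W), MF.sat R V φ w}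

/-! ### Boolean functions and clones -/

/-- A Boolean function of positive arity. -/
structure BFun : Type where
  arity : ℕ
  arity_pos : 0 < arity
  eval : (Fin arity → Bool) → Bool

/-- A Boolean clone: a set of Boolean functions containing all projections and
closed under composition. -/
def IsClone (C : Set BFun) : Prop :=
  (∀ (n : ℕ) (hn : 0 < n) (k : Fin n), (⟨n, hn, fun v => v k⟩ : BFun) ∈ C) ∧
  (∀ f ∈ C, ∀ (m : ℕ) (hm : 0 < m) (g : Fin (BFun.arity f) → (Fin m → Bool) → Bool),
    (∀ i, (⟨m, hm, g i⟩ : BFun) ∈ C) →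
    (⟨m, hm, fun v => f.eval (fun i => g i v)⟩ : BFun) ∈ C)

/-- The clone generated by a set of Boolean functions. -/
def cloneGen (O : Set BFun) : Set BFun := ⋂₀ {C : Set BFun | IsClone C ∧ O ⊆ C}

/-- `O ≼ O'`: the clone generated by `O` is contained in the clone generated by `O'`. -/
def cloneLe (O O' : Set BFun) : Prop := cloneGen O ⊆ cloneGen O'

/-- The constant-true unary Boolean function. -/
def bfTop : BFun := ⟨1, Nat.one_pos, fun _ => true⟩
/-- The constant-false unary Boolean function. -/
def bfBot : BFun := ⟨1, Nat.one_pos, fun _ => false⟩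
/-- Negation. -/
def bfNot : BFun := ⟨1, Nat.one_pos, fun v => !(v 0)⟩
/-- Binary conjunction. -/
def bfAnd : BFun := ⟨2, Nat.succ_pos 1, fun v => v 0 && v 1⟩
/-- Binary disjunction. -/
def bfOr : BFun := ⟨2, Nat.succ_pos 1, fun v => v 0 || v 1⟩
/-- Ternary exclusive or `x ⊕ y ⊕ z`. -/
def bf3Xor : BFun := ⟨3, Nat.succ_pos 2, fun v => (v 0).xor ((v 1).xor (v 2))⟩
/-- `oxor(x,y,z) = x ∨ (y ⊕ z)`. -/
def bfOxor : BFun := ⟨3, Nat.succ_pos 2, fun v => v 0 || ((v 1).xor (v 2))⟩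
/-- `aimp(x,y,z) = x ∧ (y → z)`. -/
def bfAimp : BFun := ⟨3, Nat.succ_pos 2, fun v => v 0 && (!(v 1) || v 2)⟩

/-- The (purely propositional) formula `φ` defines the Boolean function `f`. -/
def definesBF (φ : MF) (f : BFun) : Prop :=
  φ.isProp ∧ ∀ v : ℕ → Bool, φ.propEval v = f.eval (fun i => v i.val)

/-- The generating set of formulas of the simple fragment `ML_{M ∪ O}`, where
`M ⊆ {◇,□}` is specified by the two Booleans `hd` (for `◇`) and `hb` (for `□`). -/
def MOgen (hd hb : Bool) (O : Set BFun) : Set MF :=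
  {φ | (hd = true ∧ φ = MF.dia (MF.var 0)) ∨ (hb = true ∧ φ = MF.box (MF.var 0)) ∨
    ∃ f ∈ O, definesBF φ f}

/-- `Clos^Λ_M(O)`: the set of Boolean functions `f` such that some propositional formula
defining `f` is `Λ`-equivalent to some `ML_{M ∪ O}`-formula. -/
def Clos (Λ : Set MF) (hd hb : Bool) (O : Set BFun) : Set BFun :=
  {f | ∃ φ ψ : MF, definesBF φ f ∧ MLFrag (MOgen hd hb O) ψ ∧ (φ.iff ψ) ∈ Λ}

/-- `β(Φ)`: the set of Boolean functions defined by propositional formulas in `Φ`. -/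
def betaBF (Φ : Set MF) : Set BFun := {f | ∃ φ ∈ Φ, definesBF φ f}

/-- A set of modal formulas is simple if each member is `◇x`, `□x`, or purely
propositional. -/
def IsSimpleSet (Φ : Set MF) : Prop :=
  ∀ φ ∈ Φ, (∃ n, φ = MF.dia (MF.var n)) ∨ (∃ n, φ = MF.box (MF.var n)) ∨ φ.isProp

/-- `Φ` is `M`-simple (with `M` given by `hd`, `hb`): simple, and the modal operators
among its members are exactly those in `M`. -/
def IsMSimpleSet (hd hb : Bool) (Φ : Set MF) : Prop :=
  IsSimpleSet Φ ∧ ((∃ n, MF.dia (MF.var n) ∈ Φ) ↔ hd = true) ∧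
    ((∃ n, MF.box (MF.var n) ∈ Φ) ↔ hb = true)

/-! ### Propositional fragments `PL_O` -/

/-- Formulas of the propositional fragment `PL_O`. -/
inductive PLF (O : Set BFun) : Type
  | var : ℕ → PLF O
  | app : (f : BFun) → f ∈ O → (Fin f.arity → PLF O) → PLF O

namespace PLF

variable {O : Set BFun}

/-- Evaluation of a `PL_O`-formula under a truth assignment. -/
def eval (v : ℕ → Bool) : PLF O → Bool
  | .var n => v n
  | .app f _ args => f.eval (fun i => (args i).eval v)

/-- The variables occurring in a `PL_O`-formula. -/
def pvars : PLF O → Set ℕ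
  | .var n => {n}
  | .app _ _ args => ⋃ i, (args i).pvars

/-- The set of subformulas of a `PL_O`-formula. -/
def subf : PLF O → Set (PLF O)
  | .var n => {PLF.var n}
  | .app f h args => insert (PLF.app f h args) (⋃ i, (args i).subf)

/-- `|φ|_dag`: the number of distinct subformulas. -/
noncomputable def dagSize (φ : PLF O) : ℕ := φ.subf.ncard

/-- Equivalence of propositional formulas. -/
def equivPLF (φ ψ : PLF O) : Prop := ∀ v, φ.eval v = ψ.eval v

/-- `φ` fits the labeled example `(V, lab)`. -/
def fits (φ : PLF O) (e : (ℕ → Bool) × Bool) : Prop := φ.eval e.1 = e.2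

end PLF

/-- `E` uniquely characterizes `φ` with respect to the class `L` of formulas. -/
def uniqCharPL {O : Set BFun} (φ : PLF O) (L : Set (PLF O))
    (E : Set ((ℕ → Bool) × Bool)) : Prop :=
  (∀ e ∈ E, φ.fits e) ∧ ∀ ψ ∈ L, (∀ e ∈ E, ψ.fits e) → φ.equivPLF ψ

/-! ### Concept classes and PC-reductions -/

/-- A concept `c` fits the labeled example `(e, lab)`. -/
def ccFits {C : Type*} {E : Type*} (l : C → Set E) (c : C) (e : E × Bool) : Prop :=
  e.1 ∈ l c ↔ e.2 = true

/-- `S` uniquely characterizes the concept `c` within the concept class given by `l`. -/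
def ccUniqChar {C : Type*} {E : Type*} (l : C → Set E) (c : C) (S : Set (E × Bool)) : Prop :=
  (∀ e ∈ S, ccFits l c e) ∧ ∀ c', (∀ e ∈ S, ccFits l c' e) → l c' = l c

/-- A PC-reduction between concept classes. -/
structure PCRed {C1 : Type*} {E1 : Type*} {C2 : Type*} {E2 : Type*}
    (l1 : C1 → Set E1) (l2 : C2 → Set E2) where
  fc : C1 → C2
  he : E1 → E2
  cond1 : ∀ c e, e ∈ l1 c ↔ he e ∈ l2 (fc c)
  cond2 : ∀ e : E2, (∀ c, e ∈ l2 (fc c)) ∨ (∀ c, e ∉ l2 (fc c)) ∨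
    ∃ e' : E1, {c | e ∈ l2 (fc c)} = {c | e' ∈ l1 c}

/-- Extend an assignment on `PROP` to all variables (by `false` elsewhere). -/
def extAssign (PROP : Finset ℕ) (v : {x // x ∈ PROP} → Bool) : ℕ → Bool :=
  fun n => if h : n ∈ PROP then v ⟨n, h⟩ else false

/-- The concept class `PL_O[PROP]`: concepts are `PL_O`-formulas with variables in `PROP`,
examples are truth assignments on `PROP`. -/
def plSem (O : Set BFun) (PROP : Finset ℕ) :
    {φ : PLF O // φ.pvars ⊆ ↑PROP} → Set ({x // x ∈ PROP} → Bool) :=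
  fun φ => {v | φ.1.eval (extAssign PROP v) = true}

/-! ### Simple modal fragments as syntax, and finite pointed Kripke models -/

/-- Formulas of the simple modal fragment `ML_{M ∪ O}` (as a syntax): Boolean connectives
from `O`, plus `◇` if `hd` and `□` if `hb`. -/
inductive MLF (O : Set BFun) (hd hb : Bool) : Type
  | var : ℕ → MLF O hd hb
  | app : (f : BFun) → f ∈ O → (Fin f.arity → MLF O hd hb) → MLF O hd hb
  | dia : hd = true → MLF O hd hb → MLF O hd hb
  | box : hb = true → MLF O hd hb → MLF O hd hb

/-- Propositional application of a Boolean function to propositions. -/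
def BFun.evalP (f : BFun) (P : Fin f.arity → Prop) : Prop :=
  f.eval (fun i => @decide (P i) (Classical.propDecidable _)) = true

namespace MLF

variable {O : Set BFun} {hd hb : Bool}

/-- Kripke satisfaction for simple-fragment formulas. -/
def msat {W : Type} (R : W → W → Prop) (V : ℕ → W → Prop) :
    MLF O hd hb → W → Prop
  | .var n, w => V n w
  | .app f _ args, w => f.evalP (fun i => msat R V (args i) w)
  | .dia _ φ, w => ∃ u, R w u ∧ msat R V φ u
  | .box _ φ, w => ∀ u, R w u → msat R V φ u

/-- Variables of a simple-fragment formula. -/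
def mvars : MLF O hd hb → Set ℕ
  | .var n => {n}
  | .app _ _ args => ⋃ i, (args i).mvars
  | .dia _ φ => φ.mvars
  | .box _ φ => φ.mvars

end MLF

/-- A finite pointed Kripke model. -/
structure FPModel : Type 1 where
  W : Type
  fin : Finite W
  R : W → W → Prop
  V : ℕ → W → Prop
  pt : W

/-- The concept class `ML_{O,∘}[{p}]` (with `p` the variable `0`): concepts are
simple-fragment formulas over the single variable `p`, examples are finite pointed
Kripke models. -/
def mlSem (O : Set BFun) (hd hb : Bool) :
    {φ : MLF O hd hb // φ.mvars ⊆ {0}} → Set FPModel :=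
  fun φ => {M | MLF.msat M.R M.V φ.1 M.pt}

/-- Satisfaction of a modal formula in a finite pointed Kripke model. -/
def msatMF (M : FPModel) (φ : MF) : Prop := MF.sat M.R M.V φ M.pt

/-- A modal formula fits a labeled example (a finite pointed model with a label). -/
def fitsMF (φ : MF) (e : FPModel × Bool) : Prop := msatMF e.1 φ ↔ e.2 = true

/-- `K`-equivalence of modal formulas: truth at the same worlds of all Kripke models. -/
def KequivMF (φ ψ : MF) : Prop :=
  ∀ (W : Type) (R : W → W → Prop) (V : ℕ → W → Prop) (w : W),
    MF.sat R V φ w ↔ MF.sat R V ψ w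

/-- `E` uniquely characterizes `φ` relative to the fragment `L` (with respect to `K`). -/
def uniqCharMF (φ : MF) (L : Set MF) (E : Set (FPModel × Bool)) : Prop :=
  (∀ e ∈ E, fitsMF φ e) ∧ ∀ ψ ∈ L, (∀ e ∈ E, fitsMF ψ e) → KequivMF φ ψ

/-- `ML_Φ[P]`: the fragment generated by `Φ`, restricted to variables in `P`. -/
def fragSimple (Φ : Set MF) (P : Set ℕ) : Set MF :=
  {φ | MLFrag Φ φ ∧ φ.vars ⊆ P}

/-- `ML_{M∪O}[P]`. -/
def fragMO (hd hb : Bool) (O : Set BFun) (P : Set ℕ) : Set MF :=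
  fragSimple (MOgen hd hb O) P

/-- For a simple set `Φ`: the modal operators of `Φ` are among those specified by
`hd`, `hb`, and `β(Φ)` is contained in the clone generated by `O`. -/
def simpleLeOps (Φ : Set MF) (O : Set BFun) (hd hb : Bool) : Prop :=
  ((∃ n, MF.dia (MF.var n) ∈ Φ) → hd = true) ∧
  ((∃ n, MF.box (MF.var n) ∈ Φ) → hb = true) ∧
  cloneGen (betaBF Φ) ⊆ cloneGen O

/-- Decoding of a natural number as a labeled example (a finite pointed Kripke model with
a Boolean label). -/
def decodeEx (c : ℕ) : FPModel × Bool :=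
  match Denumerable.ofNat (ℕ × List (ℕ × ℕ) × List (ℕ × ℕ) × ℕ × ℕ) c with
  | (n, edges, val, pt, b) =>
    (⟨Fin (n + 1), inferInstance,
      fun u v => (u.val, v.val) ∈ edges,
      fun k w => (k, w.val) ∈ val,
      ⟨pt % (n + 1), Nat.mod_lt pt (Nat.succ_pos n)⟩⟩, b % 2 == 1)

def deltaMF (n : ℕ) : MF :=
  MF.and (MF.diaIter n MF.top) (MF.neg (MF.diaIter (n + 1) MF.top))

def PhiS (S : Set ℕ) : Set MF :=
  {φ | (∃ n ∈ S, φ = deltaMF (2 * n)) ∨ (∃ n ∉ S, φ = deltaMF (2 * n + 1))}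


/-! At the root of the chain `0 → 1 → ⋯ → k` with empty valuation, `δ_j` holds iff `j = k`, and
this stays so after substituting anything into `δ_j`, since `⊤` remains a tautology. Hence every
`ML_Φ`-formula with `Φ ⊆ {δ_j | j ∈ J}` is false there when `k ∉ J`, while `δ_k` is true. For
`S ≠ S'` some index of `Φ_S` is not an index of `Φ_{S'}`. -/

namespace MF

lemma subst_var (φ : MF) : φ.subst MF.var = φ := by
  induction φ <;> simp [subst, *]

lemma diaIter_subst (n : ℕ) (φ : MF) (σ : ℕ → MF) :
    (diaIter n φ).subst σ = diaIter n (φ.subst σ) := by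
  induction n <;> simp [diaIter, subst, *]

variable {W : Type} (R : W → W → Prop) (V : ℕ → W → Prop)

lemma sat_diaIter_congr {φ ψ : MF} (h : ∀ u, sat R V φ u ↔ sat R V ψ u) (n : ℕ) (w : W) :
    sat R V (diaIter n φ) w ↔ sat R V (diaIter n ψ) w := by
  induction n generalizing w with
  | zero => exact h w
  | succ n ih => exact exists_congr fun u => and_congr_right fun _ => ih u

lemma sat_top_subst (σ : ℕ → MF) (w : W) : sat R V (top.subst σ) w ↔ sat R V top w :=
  iff_of_true (em _) (em _)

end MF

section Delta

open MF

lemma sat_deltaMF_subst {W : Type} (R : W → W → Prop) (V : ℕ → W → Prop)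
    (k : ℕ) (σ : ℕ → MF) (w : W) :
    sat R V ((deltaMF k).subst σ) w ↔ sat R V (deltaMF k) w := by
  have htop := sat_top_subst R V σ
  simp only [deltaMF, subst, diaIter_subst, sat]
  exact and_congr (sat_diaIter_congr R V htop k w)
    (not_congr (sat_diaIter_congr R V htop (k + 1) w))

def chainRel (m : ℕ) (a b : ℕ) : Prop := b = a + 1 ∧ b ≤ m

lemma sat_diaIter_top_chainRel {m w : ℕ} (V : ℕ → ℕ → Prop) (hw : w ≤ m) (n : ℕ) :
    sat (chainRel m) V (diaIter n top) w ↔ w + n ≤ m := by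
  induction n generalizing w with
  | zero => exact iff_of_true (em _) hw
  | succ n ih =>
    simp only [diaIter, sat, chainRel]
    constructor
    · rintro ⟨_, ⟨rfl, hm⟩, hsat⟩
      have := (ih hm).mp hsat
      omega
    · intro h
      exact ⟨w + 1, ⟨rfl, by omega⟩, (ih (by omega)).mpr (by omega)⟩

lemma sat_deltaMF_chainRel (m k : ℕ) (V : ℕ → ℕ → Prop) :
    sat (chainRel m) V (deltaMF k) 0 ↔ m = k := by
  have hk := sat_diaIter_top_chainRel V (Nat.zero_le m) k
  have hk₁ := sat_diaIter_top_chainRel V (Nat.zero_le m) (k + 1)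
  simp only [deltaMF, sat] at hk₁ ⊢
  rw [hk, hk₁]
  omega

lemma MLFrag.of_mem {Φ : Set MF} {φ : MF} (h : φ ∈ Φ) : MLFrag Φ φ := by
  simpa only [subst_var] using MLFrag.app φ h MF.var MLFrag.var

lemma not_sat_chainRel_of_MLFrag {J : Set ℕ} {k : ℕ} (hk : k ∉ J) {ψ : MF}
    (hψ : MLFrag (deltaMF '' J) ψ) : ¬ sat (chainRel k) (fun _ _ => False) ψ 0 := by
  cases hψ with
  | var n => exact id
  | app φ hφ σ _ =>
    obtain ⟨j, hj, rfl⟩ := hφ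
    rw [sat_deltaMF_subst, sat_deltaMF_chainRel]
    rintro rfl
    exact hk hj

lemma sat_iff_of_iff_mem_KLogic {φ ψ : MF} (h : φ.iff ψ ∈ KLogic) {W : Type}
    (R : W → W → Prop) (V : ℕ → W → Prop) (w : W) : sat R V φ w ↔ sat R V ψ w := by
  have := h W R V w
  simp only [MF.iff, imp, sat] at this
  tauto

theorem not_exprLe_image_deltaMF {I J : Set ℕ} (h : ¬ I ⊆ J) :
    ¬ exprLe KLogic (deltaMF '' I) (deltaMF '' J) := by
  intro hle
  obtain ⟨k, hkI, hkJ⟩ := Set.not_subset.mp h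
  obtain ⟨ψ, hψ, hiff⟩ := hle (deltaMF k) (MLFrag.of_mem ⟨k, hkI, rfl⟩)
  have hδ : sat (chainRel k) (fun _ _ => False) (deltaMF k) 0 :=
    (sat_deltaMF_chainRel k k _).mpr rfl
  exact not_sat_chainRel_of_MLFrag hkJ hψ ((sat_iff_of_iff_mem_KLogic hiff _ _ _).mp hδ)

end Delta

/-- The indices of `Φ_S`: `2n` for `n ∈ S` and `2n + 1` for `n ∉ S`. -/
def phiIndex (S : Set ℕ) : Set ℕ := {k | k / 2 ∈ S ↔ Even k}

lemma PhiS_eq_image (S : Set ℕ) : PhiS S = deltaMF '' phiIndex S := by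
  ext φ
  constructor
  · rintro (⟨n, hn, rfl⟩ | ⟨n, hn, rfl⟩)
    · exact ⟨2 * n, by simp [phiIndex, hn], rfl⟩
    · refine ⟨2 * n + 1, ?_, rfl⟩
      simp [phiIndex, hn, Nat.mul_add_div two_pos]
  · rintro ⟨k, hk, rfl⟩
    obtain ⟨n, rfl | rfl⟩ := Nat.even_or_odd' k
    · exact Or.inl ⟨n, by simpa [phiIndex] using hk, rfl⟩
    · exact Or.inr ⟨n, by simpa [phiIndex, Nat.mul_add_div two_pos] using hk, rfl⟩

lemma not_phiIndex_subset {S S' : Set ℕ} (h : S ≠ S') : ¬ phiIndex S ⊆ phiIndex S' := by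
  obtain ⟨n, hn⟩ : ∃ n, ¬ (n ∈ S ↔ n ∈ S') := by
    by_contra! hall
    exact h (Set.ext hall)
  intro hsub
  by_cases hS : n ∈ S
  · have := hsub (show 2 * n ∈ phiIndex S by simp [phiIndex, hS])
    simp_all [phiIndex]
  · have := hsub (show 2 * n + 1 ∈ phiIndex S by simp [phiIndex, hS, Nat.mul_add_div two_pos])
    simp_all [phiIndex, Nat.mul_add_div two_pos]

theorem not_exprLe_PhiS {S S' : Set ℕ} (h : S ≠ S') : ¬ exprLe KLogic (PhiS S) (PhiS S') := by
  rw [PhiS_eq_image, PhiS_eq_image]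
  exact not_exprLe_image_deltaMF (not_phiIndex_subset h)

theorem stmt1 :
    (∀ S S' : Set ℕ, S ≠ S' → ¬ exprLe KLogic (PhiS S) (PhiS S')) ∧
    (∃ F : Set ℕ → Set MF, ∀ S S' : Set ℕ, S ≠ S' →
      ¬ exprLe KLogic (F S) (F S') ∧ ¬ exprLe KLogic (F S') (F S)) :=
  ⟨fun _ _ => not_exprLe_PhiS, PhiS, fun _ _ h => ⟨not_exprLe_PhiS h, not_exprLe_PhiS h.symm⟩⟩
end

section
/- Let Λ be a consistent normal modal logic of Type B (i.e., F_• ⊨ Λ and Λ ⊢ □^n⊥ for some n ≥ 1), let M ⊆ {◇,□}, and let C be any Boolean clone. Then Clos^Λ_M(C) equals: C if M = ∅; the clone generated by C ∪ {⊥} if M = {◇}; the clone generated by C ∪ {⊤} if M = {□}; and the clone generated by C ∪ {⊤,⊥} if M = {◇,□}. Here ⊤ and ⊥ denote the constant unary Boolean functions. -/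
set_option maxHeartbeats 1000000

/-!
At the irreflexive point `F_•` every `◇χ` is false and every `□χ` is true. Since `F_•` validates
`Λ`, a `Λ`-equivalence between a propositional formula and an `ML_{M ∪ C}`-formula `ψ` holds
there, so the defined Boolean function is `ψ` evaluated at `F_•`: a composition of functions of
`C` with `⊥` (from `◇`) and `⊤` (from `□`). Conversely, `Clos` is a clone containing `C`, because
`Λ` allows replacement of equivalents, and `Λ ⊢ □ⁿ⊥` yields `Λ ⊢ ◇ⁿp ↔ ⊥` and `Λ ⊢ □ⁿp ↔ ⊤`.
-/

namespace MF

theorem subst_var_s3 (χ : MF) : χ.subst var = χ := by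
  induction χ <;> simp_all [subst]

theorem subst_subst (σ τ : ℕ → MF) (χ : MF) :
    (χ.subst σ).subst τ = χ.subst fun n => (σ n).subst τ := by
  induction χ <;> simp_all [subst]

theorem isProp.subst {σ : ℕ → MF} (hσ : ∀ n, (σ n).isProp) {χ : MF} (h : χ.isProp) :
    (χ.subst σ).isProp := by
  induction χ <;> simp_all [MF.subst, isProp]

theorem propEval_subst (v : ℕ → Bool) (σ : ℕ → MF) (χ : MF) :
    (χ.subst σ).propEval v = χ.propEval fun n => (σ n).propEval v := by
  induction χ <;> simp_all [subst, propEval]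

theorem encodeMF_injective : Function.Injective encodeMF := by
  intro φ ψ h
  induction φ generalizing ψ <;> cases ψ <;> simp only [encodeMF, Nat.pair_eq_pair] at h <;> grind

def atomEval (v : MF → Bool) : MF → Bool
  | var n => v (var n)
  | neg φ => !φ.atomEval v
  | and φ ψ => φ.atomEval v && ψ.atomEval v
  | or φ ψ => φ.atomEval v || ψ.atomEval v
  | dia φ => v (dia φ)
  | box φ => v (box φ)

/-- Each variable and each modal subformula becomes the variable indexed by its code, so every
formula is a substitution instance (by `decodeMF`) of its propositional skeleton. -/
def skeleton : MF → MF
  | var n => var (var n).encodeMF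
  | neg φ => neg φ.skeleton
  | and φ ψ => and φ.skeleton ψ.skeleton
  | or φ ψ => or φ.skeleton ψ.skeleton
  | dia φ => var (dia φ).encodeMF
  | box φ => var (box φ).encodeMF

theorem isProp_skeleton (χ : MF) : χ.skeleton.isProp := by
  induction χ <;> simp_all [skeleton, isProp]

theorem propEval_skeleton (w : ℕ → Bool) (χ : MF) :
    χ.skeleton.propEval w = χ.atomEval fun ψ => w ψ.encodeMF := by
  induction χ <;> simp_all [skeleton, propEval, atomEval]

open Classical in
noncomputable def decodeMF (n : ℕ) : MF :=
  if h : ∃ χ : MF, χ.encodeMF = n then h.choose else var n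

theorem decodeMF_encodeMF (χ : MF) : decodeMF χ.encodeMF = χ := by
  have h : ∃ ψ : MF, ψ.encodeMF = χ.encodeMF := ⟨χ, rfl⟩
  rw [decodeMF, dif_pos h]
  exact encodeMF_injective h.choose_spec

theorem skeleton_subst_decodeMF (χ : MF) : χ.skeleton.subst decodeMF = χ := by
  induction χ <;> simp_all [skeleton, subst, decodeMF_encodeMF]

end MF

namespace NormalLogic

variable {Λ : Set MF}

open MF

theorem mem_of_atomEval (hΛ : NormalLogic Λ) {χ : MF} (h : ∀ v, χ.atomEval v = true) :
    χ ∈ Λ := by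
  rw [← χ.skeleton_subst_decodeMF]
  refine hΛ.usubst _ _ (hΛ.taut _ ⟨χ.isProp_skeleton, fun w => ?_⟩)
  rw [propEval_skeleton]
  exact h _

theorem mp_of_atomEval (hΛ : NormalLogic Λ) {A B : MF} (h : ∀ v, (A.imp B).atomEval v = true)
    (hA : A ∈ Λ) : B ∈ Λ :=
  hΛ.mp _ _ (hΛ.mem_of_atomEval h) hA

theorem mp₂_of_atomEval (hΛ : NormalLogic Λ) {A B C : MF}
    (h : ∀ v, (A.imp (B.imp C)).atomEval v = true) (hA : A ∈ Λ) (hB : B ∈ Λ) : C ∈ Λ :=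
  hΛ.mp _ _ (hΛ.mp_of_atomEval h hA) hB

theorem iff_refl (hΛ : NormalLogic Λ) (A : MF) : A.iff A ∈ Λ :=
  hΛ.mem_of_atomEval fun _ => by grind [MF.iff, imp, atomEval]

theorem iff_trans (hΛ : NormalLogic Λ) {A B C : MF} (hAB : A.iff B ∈ Λ) (hBC : B.iff C ∈ Λ) :
    A.iff C ∈ Λ :=
  hΛ.mp₂_of_atomEval (fun _ => by grind [MF.iff, imp, atomEval]) hAB hBC

theorem imp_box (hΛ : NormalLogic Λ) {A B : MF} (h : A.imp B ∈ Λ) : (box A).imp (box B) ∈ Λ :=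
  hΛ.mp _ _ (hΛ.axK A B) (hΛ.nec _ h)

theorem box_iff_box (hΛ : NormalLogic Λ) {A B : MF} (h : A.iff B ∈ Λ) :
    (box A).iff (box B) ∈ Λ := by
  have hAB : A.imp B ∈ Λ := hΛ.mp_of_atomEval (fun _ => by grind [MF.iff, imp, atomEval]) h
  have hBA : B.imp A ∈ Λ := hΛ.mp_of_atomEval (fun _ => by grind [MF.iff, imp, atomEval]) h
  exact hΛ.mp₂_of_atomEval (fun _ => by grind [MF.iff, imp, atomEval])
    (hΛ.imp_box hAB) (hΛ.imp_box hBA)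

theorem dia_iff_dia (hΛ : NormalLogic Λ) {A B : MF} (h : A.iff B ∈ Λ) :
    (dia A).iff (dia B) ∈ Λ := by
  have hneg : (neg A).iff (neg B) ∈ Λ :=
    hΛ.mp_of_atomEval (fun _ => by grind [MF.iff, imp, atomEval]) h
  exact hΛ.mp _ _ (hΛ.mp₂_of_atomEval (fun _ => by grind [MF.iff, imp, atomEval])
    (hΛ.dual A) (hΛ.dual B)) (hΛ.box_iff_box hneg)

theorem iff_subst_of_iff (hΛ : NormalLogic Λ) {σ τ : ℕ → MF} (h : ∀ n, (σ n).iff (τ n) ∈ Λ)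
    (χ : MF) : (χ.subst σ).iff (χ.subst τ) ∈ Λ := by
  induction χ with
  | var n => exact h n
  | neg A ih => exact hΛ.mp_of_atomEval (fun _ => by grind [MF.iff, imp, atomEval, subst]) ih
  | and A B ihA ihB =>
    exact hΛ.mp₂_of_atomEval (fun _ => by grind [MF.iff, imp, atomEval, subst]) ihA ihB
  | or A B ihA ihB =>
    exact hΛ.mp₂_of_atomEval (fun _ => by grind [MF.iff, imp, atomEval, subst]) ihA ihB
  | dia A ih => exact hΛ.dia_iff_dia ih
  | box A ih => exact hΛ.box_iff_box ih

theorem boxIter_imp_boxIter (hΛ : NormalLogic Λ) {A B : MF} (h : A.imp B ∈ Λ) :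
    ∀ k, (boxIter k A).imp (boxIter k B) ∈ Λ
  | 0 => h
  | k + 1 => hΛ.imp_box (hΛ.boxIter_imp_boxIter h k)

theorem boxIter_mem_of_boxIter_bot (hΛ : NormalLogic Λ) {n : ℕ} (hn : boxIter n bot ∈ Λ)
    (A : MF) : boxIter n A ∈ Λ :=
  hΛ.mp _ _ (hΛ.boxIter_imp_boxIter (hΛ.mem_of_atomEval fun _ => by
    grind [imp, bot, atomEval]) n) hn

theorem boxIter_neg_imp_neg_diaIter (hΛ : NormalLogic Λ) (A : MF) :
    ∀ k, (boxIter k (neg A)).imp (neg (diaIter k A)) ∈ Λ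
  | 0 => hΛ.mem_of_atomEval fun _ => by grind [imp, boxIter, diaIter, atomEval]
  | k + 1 =>
    hΛ.mp₂_of_atomEval
      (fun _ => by grind (ematch := 10) [MF.iff, imp, atomEval, boxIter, diaIter])
      (hΛ.imp_box (hΛ.boxIter_neg_imp_neg_diaIter A k)) (hΛ.dual (diaIter k A))

theorem top_iff_boxIter (hΛ : NormalLogic Λ) {n : ℕ} (hn : boxIter n bot ∈ Λ) :
    top.iff (boxIter n (var 0)) ∈ Λ :=
  hΛ.mp_of_atomEval (fun _ => by grind (ematch := 10) [MF.iff, imp, top, atomEval])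
    (hΛ.boxIter_mem_of_boxIter_bot hn (var 0))

theorem bot_iff_diaIter (hΛ : NormalLogic Λ) {n : ℕ} (hn : boxIter n bot ∈ Λ) :
    bot.iff (diaIter n (var 0)) ∈ Λ :=
  hΛ.mp_of_atomEval (fun _ => by grind (ematch := 10) [MF.iff, imp, bot, atomEval])
    (hΛ.mp _ _ (hΛ.boxIter_neg_imp_neg_diaIter (var 0) n) (hΛ.boxIter_mem_of_boxIter_bot hn _))

end NormalLogic

namespace MF

def irreflEval (v : ℕ → Bool) : MF → Bool
  | var n => v n
  | neg φ => !φ.irreflEval v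
  | and φ ψ => φ.irreflEval v && ψ.irreflEval v
  | or φ ψ => φ.irreflEval v || ψ.irreflEval v
  | dia _ => false
  | box _ => true

theorem irreflEval_subst (v : ℕ → Bool) (σ : ℕ → MF) (χ : MF) :
    (χ.subst σ).irreflEval v = χ.irreflEval fun n => (σ n).irreflEval v := by
  induction χ <;> simp_all [subst, irreflEval]

theorem isProp.irreflEval_eq {χ : MF} (h : χ.isProp) (v : ℕ → Bool) :
    χ.irreflEval v = χ.propEval v := by
  induction χ <;> simp_all [isProp, irreflEval, propEval]

theorem sat_irreflPoint_iff (v : ℕ → Bool) (χ : MF) :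
    χ.sat (W := Unit) (fun _ _ => False) (fun n _ => v n = true) () ↔ χ.irreflEval v = true := by
  induction χ <;> simp_all [sat, irreflEval]

theorem exists_isProp_propEval_eq (k : ℕ) (g : (ℕ → Bool) → Bool)
    (hg : ∀ v w, (∀ i < k, v i = w i) → g v = g w) :
    ∃ φ : MF, φ.isProp ∧ ∀ v, φ.propEval v = g v := by
  induction k generalizing g with
  | zero =>
    refine ⟨if g fun _ => true then top else bot, by split <;> trivial, fun v => ?_⟩
    rw [hg v (fun _ => true) (by simp)]
    split <;> simp_all [top, bot, propEval]
  | succ k ih =>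
    have hupd : ∀ b, ∀ v w, (∀ i < k, v i = w i) →
        g (Function.update v k b) = g (Function.update w k b) := by
      intro b v w h
      refine hg _ _ fun i hi => ?_
      rcases (Nat.lt_succ_iff_lt_or_eq.1 hi) with hi | rfl
      · simp [Function.update, hi.ne, h i hi]
      · simp
    obtain ⟨φ₁, hφ₁, h₁⟩ := ih _ (hupd true)
    obtain ⟨φ₀, hφ₀, h₀⟩ := ih _ (hupd false)
    refine ⟨or (and (var k) φ₁) (and (neg (var k)) φ₀), ⟨⟨trivial, hφ₁⟩, trivial, hφ₀⟩,
      fun v => ?_⟩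
    have hupd_self : ∀ b, v k = b → g (Function.update v k b) = g v := by
      rintro b rfl
      rw [Function.update_eq_self]
    cases hk : v k <;> simp [propEval, hk, h₀, h₁, hupd_self _ hk]

end MF

theorem exists_definesBF (f : BFun) : ∃ φ : MF, definesBF φ f :=
  MF.exists_isProp_propEval_eq f.arity (fun v => f.eval fun i => v i)
    (fun _ _ h => congrArg f.eval (funext fun i => h i i.isLt))

namespace MLFrag

variable {Φ : Set MF}

theorem subst {ψ : MF} (h : MLFrag Φ ψ) {τ : ℕ → MF} (hτ : ∀ n, MLFrag Φ (τ n)) :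
    MLFrag Φ (ψ.subst τ) := by
  induction h with
  | var n => exact hτ n
  | app φ hφ σ _ ih =>
    rw [MF.subst_subst]
    exact .app φ hφ _ ih

theorem of_mem_s3 {φ : MF} (hφ : φ ∈ Φ) : MLFrag Φ φ :=
  φ.subst_var_s3 ▸ .app φ hφ _ .var

theorem diaIter (hΦ : MF.dia (MF.var 0) ∈ Φ) {ψ : MF} (h : MLFrag Φ ψ) :
    ∀ n, MLFrag Φ (MF.diaIter n ψ)
  | 0 => h
  | n + 1 => .app _ hΦ _ fun _ => diaIter hΦ h n

theorem boxIter (hΦ : MF.box (MF.var 0) ∈ Φ) {ψ : MF} (h : MLFrag Φ ψ) :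
    ∀ n, MLFrag Φ (MF.boxIter n ψ)
  | 0 => h
  | n + 1 => .app _ hΦ _ fun _ => boxIter hΦ h n

end MLFrag

theorem isClone_cloneGen (O : Set BFun) : IsClone (cloneGen O) :=
  ⟨fun n hn k _ hD => hD.1.1 n hn k,
    fun f hf m hm g hg D hD => hD.1.2 f (hf D hD) m hm g fun i => hg i D hD⟩

theorem subset_cloneGen (O : Set BFun) : O ⊆ cloneGen O :=
  fun _ hf _ hD => hD.2 hf

theorem cloneGen_subset {O D : Set BFun} (hD : IsClone D) (h : O ⊆ D) : cloneGen O ⊆ D :=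
  Set.sInter_subset_of_mem ⟨hD, h⟩

theorem IsClone.cloneGen_eq {C : Set BFun} (hC : IsClone C) : cloneGen C = C :=
  (cloneGen_subset hC le_rfl).antisymm (subset_cloneGen C)

theorem IsClone.const_mem {D : Set BFun} (hD : IsClone D) {b : Bool}
    (hb : ⟨1, Nat.one_pos, fun _ => b⟩ ∈ D) (m : ℕ) (hm : 0 < m) : ⟨m, hm, fun _ => b⟩ ∈ D :=
  hD.2 _ hb m hm (fun _ v => v ⟨0, hm⟩) fun _ => hD.1 m hm _

def modalConsts (hd hb : Bool) : Set BFun :=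
  {f | hd = true ∧ f = bfBot ∨ hb = true ∧ f = bfTop}

-- Variables beyond the arity read coordinate `0`, so that they still denote projections.
def extendFin {m : ℕ} (hm : 0 < m) (v : Fin m → Bool) (n : ℕ) : Bool :=
  v (if h : n < m then ⟨n, h⟩ else ⟨0, hm⟩)

theorem irreflEval_mem_cloneGen {hd hb : Bool} {C : Set BFun} {ψ : MF}
    (h : MLFrag (MOgen hd hb C) ψ) {m : ℕ} (hm : 0 < m) :
    (⟨m, hm, fun v => ψ.irreflEval (extendFin hm v)⟩ : BFun) ∈
      cloneGen (C ∪ modalConsts hd hb) := by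
  have hD := isClone_cloneGen (C ∪ modalConsts hd hb)
  induction h with
  | var n => exact hD.1 m hm _
  | app φ hφ σ _ ih =>
    rcases hφ with ⟨hd, rfl⟩ | ⟨hb, rfl⟩ | ⟨g, hg, hφg⟩
    · exact hD.const_mem (subset_cloneGen _ (Or.inr (Or.inl ⟨hd, rfl⟩))) m hm
    · exact hD.const_mem (subset_cloneGen _ (Or.inr (Or.inr ⟨hb, rfl⟩))) m hm
    · convert hD.2 g (subset_cloneGen _ (Or.inl hg)) m hm _ fun i => ih i using 3 with v
      rw [MF.irreflEval_subst, hφg.1.irreflEval_eq, hφg.2]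

theorem irreflEval_eq_of_valid_iff {A B : MF} (h : validOnIrreflPoint (A.iff B))
    (v : ℕ → Bool) : A.irreflEval v = B.irreflEval v := by
  have hAB := h fun n => v n = true
  rw [MF.sat_irreflPoint_iff] at hAB
  grind [MF.iff, MF.imp, MF.irreflEval]

theorem clos_subset_cloneGen {Λ : Set MF} (hval : ∀ φ ∈ Λ, validOnIrreflPoint φ)
    (hd hb : Bool) (C : Set BFun) : Clos Λ hd hb C ⊆ cloneGen (C ∪ modalConsts hd hb) := by
  rintro ⟨k, hk, e⟩ ⟨φ, ψ, hφ, hψ, hφψ⟩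
  convert irreflEval_mem_cloneGen hψ hk using 3 with v
  rw [← irreflEval_eq_of_valid_iff (hval _ hφψ), hφ.1.irreflEval_eq, hφ.2]
  congr 1 with i
  simp [extendFin, i.isLt]

section LowerBound

variable {Λ : Set MF}

theorem isClone_clos (hΛ : NormalLogic Λ) (hd hb : Bool) (C : Set BFun) :
    IsClone (Clos Λ hd hb C) := by
  refine ⟨fun n _ k => ⟨.var k, .var k, ⟨trivial, fun _ => rfl⟩, .var k, hΛ.iff_refl _⟩, ?_⟩
  rintro f ⟨φ, ψ, hφ, hψ, hφψ⟩ m hm g hg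
  choose φs ψs hφs hψs hφψs using hg
  let σ : ℕ → MF := fun n => if h : n < f.arity then φs ⟨n, h⟩ else .var n
  let τ : ℕ → MF := fun n => if h : n < f.arity then ψs ⟨n, h⟩ else .var n
  refine ⟨φ.subst σ, ψ.subst τ, ⟨hφ.1.subst fun n => ?_, fun v => ?_⟩, hψ.subst fun n => ?_,
    hΛ.iff_trans (hΛ.iff_subst_of_iff (fun n => ?_) φ) (hΛ.usubst _ τ hφψ)⟩
  · unfold σ; split; exacts [(hφs _).1, trivial]
  · rw [MF.propEval_subst, hφ.2]
    congr 1 with i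
    simp [σ, (hφs i).2]
  · unfold τ; split; exacts [hψs _, .var n]
  · unfold σ τ; split; exacts [hφψs _, hΛ.iff_refl _]

theorem subset_clos (hΛ : NormalLogic Λ) (hd hb : Bool) (C : Set BFun) :
    C ⊆ Clos Λ hd hb C := fun f hf => by
  obtain ⟨φ, hφ⟩ := exists_definesBF f
  exact ⟨φ, φ, hφ, .of_mem (Or.inr (Or.inr ⟨f, hf, hφ⟩)), hΛ.iff_refl φ⟩

theorem bfBot_mem_clos (hΛ : NormalLogic Λ) {n : ℕ} (hn : MF.boxIter n MF.bot ∈ Λ) (hb : Bool)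
    (C : Set BFun) : bfBot ∈ Clos Λ true hb C :=
  ⟨MF.bot, MF.diaIter n (.var 0),
    ⟨⟨trivial, trivial⟩, fun _ => by simp [MF.bot, MF.propEval, bfBot]⟩,
    .diaIter (Or.inl ⟨rfl, rfl⟩) (.var 0) n, hΛ.bot_iff_diaIter hn⟩

theorem bfTop_mem_clos (hΛ : NormalLogic Λ) {n : ℕ} (hn : MF.boxIter n MF.bot ∈ Λ) (hd : Bool)
    (C : Set BFun) : bfTop ∈ Clos Λ hd true C :=
  ⟨MF.top, MF.boxIter n (.var 0),
    ⟨⟨trivial, trivial⟩, fun _ => by simp [MF.top, MF.propEval, bfTop]⟩,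
    .boxIter (Or.inr (Or.inl ⟨rfl, rfl⟩)) (.var 0) n, hΛ.top_iff_boxIter hn⟩

theorem modalConsts_subset_clos (hΛ : NormalLogic Λ) {n : ℕ} (hn : MF.boxIter n MF.bot ∈ Λ)
    (hd hb : Bool) (C : Set BFun) : modalConsts hd hb ⊆ Clos Λ hd hb C := by
  rintro f (⟨rfl, rfl⟩ | ⟨rfl, rfl⟩)
  exacts [bfBot_mem_clos hΛ hn hb C, bfTop_mem_clos hΛ hn hd C]

end LowerBound

theorem clos_eq_cloneGen {Λ : Set MF} (hΛ : NormalLogic Λ) (hB : TypeB Λ) (hd hb : Bool)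
    (C : Set BFun) : Clos Λ hd hb C = cloneGen (C ∪ modalConsts hd hb) := by
  obtain ⟨hval, n, -, hn⟩ := hB
  exact (clos_subset_cloneGen hval hd hb C).antisymm <| cloneGen_subset (isClone_clos hΛ hd hb C)
    (Set.union_subset (subset_clos hΛ hd hb C) (modalConsts_subset_clos hΛ hn hd hb C))

theorem stmt3_general (Λ : Set MF) (hΛ : NormalLogic Λ)
    (hB : TypeB Λ) (C : Set BFun) (hC : IsClone C) :
    Clos Λ false false C = C ∧
    Clos Λ true false C = cloneGen (C ∪ {bfBot}) ∧
    Clos Λ false true C = cloneGen (C ∪ {bfTop}) ∧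
    Clos Λ true true C = cloneGen (C ∪ {bfTop, bfBot}) := by
  have h₀₀ : modalConsts false false = ∅ := by ext; simp [modalConsts]
  have h₁₀ : modalConsts true false = {bfBot} := by ext; simp [modalConsts]
  have h₀₁ : modalConsts false true = {bfTop} := by ext; simp [modalConsts]
  have h₁₁ : modalConsts true true = {bfTop, bfBot} := by ext; simp [modalConsts, or_comm]
  simp only [clos_eq_cloneGen hΛ hB, h₀₀, h₁₀, h₀₁, h₁₁, Set.union_empty, hC.cloneGen_eq,
    and_self]

theorem stmt3 (Λ : Set MF) (hΛ : NormalLogic Λ) (hcons : Λ ≠ Set.univ)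
    (hB : TypeB Λ) (C : Set BFun) (hC : IsClone C) :
    Clos Λ false false C = C ∧
    Clos Λ true false C = cloneGen (C ∪ {bfBot}) ∧
    Clos Λ false true C = cloneGen (C ∪ {bfTop}) ∧
    Clos Λ true true C = cloneGen (C ∪ {bfTop, bfBot}) :=
  stmt3_general Λ hΛ hB C hC
end
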